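/- arXiv:1202.2424 — 3 statements merged into one kernel-verified Lean document; each statement's English description precedes it below -/
import Mathlib

section
/- Let J ⊆ ℝ be an interval and let A(ξ) be a family of n×n Hermitian matrices depending C¹ on ξ ∈ J, such that the derivative satisfies ∂_ξ A(ξ) ≥ β·I for some β > 0 (in the sense of quadratic forms). Then for any α > 0, the Lebesgue measure of the set {ξ ∈ J : A(ξ) is not invertible, or ‖A(ξ)⁻¹‖ ≥ α⁻¹} is at most 2·n·α·β⁻¹. -/
/-!
Let `N ξ` be the number of eigenvalues of `A ξ` above `α`. At a bad point some eigenvalue lies in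
`[-α, α]`, so `N ξ < n`. Between bad points `x < y` the quadratic form of `A` grows by at least
`β (y - x) ‖v‖²`; once `β (y - x) > 2α`, Weyl's monotonicity principle (a dimension count for two
disjoint spectral subspaces) pushes that small eigenvalue of `A x`, together with all eigenvalues
above it, past `α`, so `N x < N y`. Hence each of the `n` level sets `{N = k}`, `k < n`, of the bad
set has diameter at most `2α/β`.
-/

open MeasureTheory Finset Module Submodule Filter Topology
open scoped InnerProductSpace

namespace OrthonormalBasis

variable {ι 𝕜 E : Type*} [Fintype ι] [RCLike 𝕜] [NormedAddCommGroup E] [InnerProductSpace 𝕜 E]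

theorem repr_eq_zero_of_mem_span_image (b : OrthonormalBasis ι 𝕜 E) {s : Set ι} {v : E}
    (hv : v ∈ span 𝕜 (b '' s)) {i : ι} (hi : i ∉ s) : b.repr v i = 0 := by
  rw [← b.coe_toBasis, b.toBasis.mem_span_image] at hv
  simpa using Finsupp.notMem_support_iff.mp fun h => hi (hv h)

theorem finrank_span_image (b : OrthonormalBasis ι 𝕜 E) (s : Finset ι) :
    finrank 𝕜 (span 𝕜 (b '' s)) = #s := by
  have hs : b '' s = Set.range (b ∘ ((↑) : s → ι)) := by
    rw [Set.range_comp, Subtype.range_coe]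
  rw [hs, finrank_span_eq_card (b.orthonormal.linearIndependent.comp _ Subtype.val_injective)]
  simp

end OrthonormalBasis

namespace LinearMap.IsSymmetric

variable {𝕜 E : Type*} [RCLike 𝕜] [NormedAddCommGroup E] [InnerProductSpace 𝕜 E]
  [FiniteDimensional 𝕜 E] {S T : E →ₗ[𝕜] E} {n : ℕ} (hT : T.IsSymmetric) (hn : finrank 𝕜 E = n)

include hT in
theorem norm_sq_eq_sum_eigenvectorBasis (v : E) :
    ‖v‖ ^ 2 = ∑ i, ‖(hT.eigenvectorBasis hn).repr v i‖ ^ 2 := by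
  simp_rw [OrthonormalBasis.repr_apply_apply, OrthonormalBasis.sum_sq_norm_inner_right]

theorem re_inner_apply_self_eq_sum (v : E) :
    RCLike.re ⟪T v, v⟫_𝕜 =
      ∑ i, hT.eigenvalues hn i * ‖(hT.eigenvectorBasis hn).repr v i‖ ^ 2 := by
  rw [← (hT.eigenvectorBasis hn).repr.inner_map_map, PiLp.inner_apply, map_sum]
  refine Fintype.sum_congr _ _ fun i => ?_
  rw [hT.eigenvectorBasis_apply_self_apply, RCLike.inner_apply', map_mul (starRingEnd 𝕜),
    RCLike.conj_ofReal, mul_assoc, RCLike.conj_mul, ← RCLike.ofReal_pow, ← RCLike.ofReal_mul,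
    RCLike.ofReal_re]

theorem mul_norm_le_norm_apply {c : ℝ} (hc : 0 ≤ c) (h : ∀ i, c ≤ |hT.eigenvalues hn i|)
    (v : E) : c * ‖v‖ ≤ ‖T v‖ := by
  refine (pow_le_pow_iff_left₀ (by positivity) (norm_nonneg _) two_ne_zero).1 ?_
  rw [mul_pow, hT.norm_sq_eq_sum_eigenvectorBasis hn, hT.norm_sq_eq_sum_eigenvectorBasis hn,
    mul_sum]
  gcongr with i
  simp_rw [hT.eigenvectorBasis_apply_self_apply, norm_mul, mul_pow, RCLike.norm_ofReal]
  gcongr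
  exact h i

theorem mul_norm_sq_lt_re_inner_apply_self {c : ℝ} {v : E}
    (hv : v ∈ span 𝕜 (hT.eigenvectorBasis hn '' {i | c < hT.eigenvalues hn i})) (hv0 : v ≠ 0) :
    c * ‖v‖ ^ 2 < RCLike.re ⟪T v, v⟫_𝕜 := by
  rw [hT.re_inner_apply_self_eq_sum hn, hT.norm_sq_eq_sum_eigenvectorBasis hn, mul_sum]
  obtain ⟨i₀, hi₀⟩ : ∃ i, (hT.eigenvectorBasis hn).repr v i ≠ 0 := by
    by_contra! h
    exact hv0 ((hT.eigenvectorBasis hn).repr.map_eq_zero_iff.1 (PiLp.ext h))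
  have hmem : ∀ i, (hT.eigenvectorBasis hn).repr v i ≠ 0 → c < hT.eigenvalues hn i :=
    fun i hi => not_not.1 fun h =>
      hi ((hT.eigenvectorBasis hn).repr_eq_zero_of_mem_span_image hv h)
  refine sum_lt_sum (fun i _ => ?_) ⟨i₀, mem_univ _, by gcongr; exact hmem i₀ hi₀⟩
  by_cases hi : (hT.eigenvectorBasis hn).repr v i = 0
  · simp [hi]
  · gcongr; exact (hmem i hi).le

theorem re_inner_apply_self_le_mul_norm_sq {c : ℝ} {v : E}
    (hv : v ∈ span 𝕜 (hT.eigenvectorBasis hn '' {i | hT.eigenvalues hn i ≤ c})) :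
    RCLike.re ⟪T v, v⟫_𝕜 ≤ c * ‖v‖ ^ 2 := by
  rw [hT.re_inner_apply_self_eq_sum hn, hT.norm_sq_eq_sum_eigenvectorBasis hn, mul_sum]
  refine sum_le_sum fun i _ => ?_
  by_cases hi : hT.eigenvalues hn i ≤ c
  · gcongr
  · simp [(hT.eigenvectorBasis hn).repr_eq_zero_of_mem_span_image hv hi]

theorem card_lt_eigenvalues_le_of_le_add (hS : S.IsSymmetric) {d : ℝ}
    (hST : ∀ v, RCLike.re ⟪S v, v⟫_𝕜 + d * ‖v‖ ^ 2 ≤ RCLike.re ⟪T v, v⟫_𝕜) (c : ℝ) :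
    #{i | c < hS.eigenvalues hn i} ≤ #{i | c + d < hT.eigenvalues hn i} := by
  have hdisj : Disjoint (span 𝕜 (hS.eigenvectorBasis hn '' {i | c < hS.eigenvalues hn i}))
      (span 𝕜 (hT.eigenvectorBasis hn '' {i | hT.eigenvalues hn i ≤ c + d})) := by
    refine Submodule.disjoint_def.2 fun v hvS hvT => not_not.1 fun hv0 => ?_
    have := hS.mul_norm_sq_lt_re_inner_apply_self hn hvS hv0
    have := hT.re_inner_apply_self_le_mul_norm_sq hn hvT
    linarith [hST v]
  have hdim := Submodule.finrank_add_finrank_le_of_disjoint hdisj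
  rw [← coe_filter_univ, ← coe_filter_univ, OrthonormalBasis.finrank_span_image,
    OrthonormalBasis.finrank_span_image, hn] at hdim
  have := card_filter_add_card_filter_not (s := univ) fun i => c + d < hT.eigenvalues hn i
  simp only [not_lt, card_univ, Fintype.card_fin] at this
  omega

theorem card_lt_eigenvalues_lt_of_le_add (hS : S.IsSymmetric) {α d : ℝ} (hd : 2 * α < d)
    (hST : ∀ v, RCLike.re ⟪S v, v⟫_𝕜 + d * ‖v‖ ^ 2 ≤ RCLike.re ⟪T v, v⟫_𝕜)
    {i₀ : Fin n} (hi₀ : |hS.eigenvalues hn i₀| ≤ α) :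
    #{i | α < hS.eigenvalues hn i} < #{i | α < hT.eigenvalues hn i} := by
  have hsub : ({i | α < hS.eigenvalues hn i} : Finset (Fin n)) ⊂
      ({i | α - d < hS.eigenvalues hn i} : Finset (Fin n)) := by
    refine (ssubset_iff_of_subset fun i => ?_).2 ⟨i₀, ?_, ?_⟩
    · simp only [mem_filter, mem_univ, true_and]
      intro h
      linarith [abs_nonneg (hS.eigenvalues hn i₀)]
    · simp only [mem_filter, mem_univ, true_and]; linarith [neg_abs_le (hS.eigenvalues hn i₀)]
    · simp only [mem_filter, mem_univ, true_and, not_lt]; exact (le_abs_self _).trans hi₀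
  calc #{i | α < hS.eigenvalues hn i} < #{i | α - d < hS.eigenvalues hn i} := card_lt_card hsub
    _ ≤ #{i | α - d + d < hT.eigenvalues hn i} := hT.card_lt_eigenvalues_le_of_le_add hn hS hST _
    _ = #{i | α < hT.eigenvalues hn i} := by rw [sub_add_cancel]

end LinearMap.IsSymmetric

theorem Set.OrdConnected.mul_sub_le_sub_of_hasDerivWithinAt {J : Set ℝ} (hJ : J.OrdConnected)
    {f f' : ℝ → ℝ} {β : ℝ} (hf : ∀ x ∈ J, HasDerivWithinAt f (f' x) J x)
    (hβ : ∀ x ∈ J, β ≤ f' x) {x y : ℝ} (hx : x ∈ J) (hy : y ∈ J) (hxy : x ≤ y) :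
    β * (y - x) ≤ f y - f x := by
  have hg : ∀ t ∈ J, HasDerivWithinAt (fun t => f t - β * t) (f' t - β) J t := fun t ht => by
    simpa using (hf t ht).fun_sub ((hasDerivWithinAt_id t J).const_mul β)
  have hmono : MonotoneOn (fun t => f t - β * t) J :=
    monotoneOn_of_hasDerivWithinAt_nonneg (convex_iff_ordConnected.2 hJ)
      (fun t ht => (hg t ht).continuousWithinAt)
      (fun t ht => (hg t (interior_subset ht)).mono interior_subset)
      (fun t ht => sub_nonneg.2 (hβ t (interior_subset ht)))
  linarith [hmono hx hy hxy]

theorem volume_le_of_strictMono_across_gaps {s : Set ℝ} {N : ℝ → ℕ} {n : ℕ} {δ : ℝ}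
    (hN : ∀ x ∈ s, N x < n) (hgap : ∀ x ∈ s, ∀ y ∈ s, x + δ < y → N x < N y) :
    volume s ≤ n * ENNReal.ofReal δ := by
  have hlevel : ∀ k, volume {x ∈ s | N x = k} ≤ ENNReal.ofReal δ := fun k => by
    refine (Real.volume_le_diam _).trans (Metric.ediam_le fun x ⟨hx, hxk⟩ y ⟨hy, hyk⟩ => ?_)
    rw [edist_dist, Real.dist_eq]
    refine ENNReal.ofReal_le_ofReal (abs_sub_le_iff.2 ⟨?_, ?_⟩) <;> by_contra! h
    · exact (hgap y hy x hx (by linarith)).ne (hyk.trans hxk.symm)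
    · exact (hgap x hx y hy (by linarith)).ne (hxk.trans hyk.symm)
  calc volume s ≤ volume (⋃ k ∈ range n, {x ∈ s | N x = k}) :=
        measure_mono fun x hx => Set.mem_biUnion (mem_range.2 (hN x hx)) ⟨hx, rfl⟩
    _ ≤ ∑ k ∈ range n, volume {x ∈ s | N x = k} := measure_biUnion_finset_le _ _
    _ ≤ ∑ k ∈ range n, ENNReal.ofReal δ := sum_le_sum fun k _ => hlevel k
    _ = n * ENNReal.ofReal δ := by simp

namespace Matrix

variable {m 𝕜 : Type*} [Fintype m] [DecidableEq m] [RCLike 𝕜]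

theorem isUnit_and_norm_toEuclideanCLM_inv_lt {M : Matrix m m 𝕜} {α c : ℝ} (hα : 0 < α)
    (hc : α < c) (hM : ∀ v, c * ‖v‖ ≤ ‖toEuclideanCLM (𝕜 := 𝕜) M v‖) :
    IsUnit M ∧ ‖toEuclideanCLM (𝕜 := 𝕜) M⁻¹‖ < α⁻¹ := by
  have hc0 : 0 < c := hα.trans hc
  have hu : IsUnit M := by
    refine mulVec_injective_iff_isUnit.1 fun x y hxy => sub_eq_zero.1 ?_
    have := hM (WithLp.toLp 2 (x - y))
    rw [toEuclideanCLM_toLp, mulVec_sub, hxy, sub_self, WithLp.toLp_zero, norm_zero] at this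
    exact (WithLp.toLp_eq_zero 2).1 (norm_le_zero_iff.1 (nonpos_of_mul_nonpos_right this hc0))
  refine ⟨hu, (ContinuousLinearMap.opNorm_le_bound _ (inv_nonneg.2 hc0.le) fun w => ?_).trans_lt
    ((inv_lt_inv₀ hc0 hα).2 hc)⟩
  have := hM (toEuclideanCLM (𝕜 := 𝕜) M⁻¹ w)
  rw [← mul_apply_eq_comp, ← map_mul, mul_nonsing_inv _ ((isUnit_iff_isUnit_det M).1 hu),
    map_one, one_apply_eq_self] at this
  rwa [← le_inv_mul_iff₀ hc0] at this

theorem exists_abs_eigenvalues_le {M : Matrix m m 𝕜} (hM : (toEuclideanLin M).IsSymmetric)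
    {n : ℕ} (hn : finrank 𝕜 (EuclideanSpace 𝕜 m) = n) {α : ℝ} (hα : 0 < α)
    (h : ¬IsUnit M ∨ α⁻¹ ≤ ‖toEuclideanCLM (𝕜 := 𝕜) M⁻¹‖) :
    ∃ i, |hM.eigenvalues hn i| ≤ α := by
  by_contra! hlarge
  obtain ⟨c, hc_le, hαc⟩ : ∃ c, (∀ i, c ≤ |hM.eigenvalues hn i|) ∧ α < c :=
    ((eventually_all.2 fun i => eventually_le_nhds (hlarge i)).filter_mono nhdsWithin_le_nhds
      |>.and (self_mem_nhdsWithin : ∀ᶠ c in 𝓝[>] α, α < c)).exists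
  obtain ⟨hu, hlt⟩ := isUnit_and_norm_toEuclideanCLM_inv_lt hα hαc
    (hM.mul_norm_le_norm_apply hn (hα.trans hαc).le hc_le)
  exact h.elim (· hu) (not_le.2 hlt)

theorem hasDerivWithinAt_re_inner_toEuclideanCLM {A : ℝ → Matrix m m 𝕜} {A' : Matrix m m 𝕜}
    {s : Set ℝ} {ξ : ℝ} (hA : ∀ i j, HasDerivWithinAt (fun t => A t i j) (A' i j) s ξ)
    (v : EuclideanSpace 𝕜 m) :
    HasDerivWithinAt (fun t => RCLike.re ⟪toEuclideanCLM (𝕜 := 𝕜) (A t) v, v⟫_𝕜)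
      (RCLike.re ⟪toEuclideanCLM (𝕜 := 𝕜) A' v, v⟫_𝕜) s ξ := by
  have hexpand : ∀ M : Matrix m m 𝕜, RCLike.re ⟪toEuclideanCLM (𝕜 := 𝕜) M v, v⟫_𝕜 =
      RCLike.re (∑ i, ∑ j, M i j * v j * star (v i)) := fun M => by
    -- pairing as `⟪v, M v⟫` leaves the entries of `M` unconjugated
    rw [inner_re_symm, EuclideanSpace.inner_eq_star_dotProduct, ofLp_toEuclideanCLM]
    simp [dotProduct, mulVec, sum_mul]
  simp only [hexpand]
  exact RCLike.reCLM.hasFDerivAt.comp_hasDerivWithinAt ξ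
    (HasDerivWithinAt.fun_sum fun i _ => HasDerivWithinAt.fun_sum fun j _ =>
      ((hA i j).mul_const _).mul_const _)

theorem re_inner_toEuclideanCLM_add_le {J : Set ℝ} (hJ : J.OrdConnected)
    {A A' : ℝ → Matrix m m 𝕜}
    (hA : ∀ ξ ∈ J, ∀ i j, HasDerivWithinAt (fun t => A t i j) (A' ξ i j) J ξ) {β : ℝ}
    (hβ : ∀ ξ ∈ J, ∀ v, β * ‖v‖ ^ 2 ≤ RCLike.re ⟪toEuclideanCLM (𝕜 := 𝕜) (A' ξ) v, v⟫_𝕜)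
    {x y : ℝ} (hx : x ∈ J) (hy : y ∈ J) (hxy : x ≤ y) (v : EuclideanSpace 𝕜 m) :
    RCLike.re ⟪toEuclideanCLM (𝕜 := 𝕜) (A x) v, v⟫_𝕜 + β * (y - x) * ‖v‖ ^ 2 ≤
      RCLike.re ⟪toEuclideanCLM (𝕜 := 𝕜) (A y) v, v⟫_𝕜 := by
  have := hJ.mul_sub_le_sub_of_hasDerivWithinAt
    (fun ξ hξ => hasDerivWithinAt_re_inner_toEuclideanCLM (hA ξ hξ) v) (fun ξ hξ => hβ ξ hξ v)
    hx hy hxy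
  linarith

end Matrix

theorem measure_small_inverse_le_general
    (n : ℕ) (J : Set ℝ) (hJ : J.OrdConnected)
    (A A' : ℝ → Matrix (Fin n) (Fin n) ℂ)
    (hherm : ∀ ξ ∈ J, (A ξ).IsHermitian)
    (hderiv : ∀ ξ ∈ J, ∀ i j, HasDerivWithinAt (fun t => A t i j) (A' ξ i j) J ξ)
    (β : ℝ) (hβ : 0 < β)
    (hpos : ∀ ξ ∈ J, ∀ v : EuclideanSpace ℂ (Fin n),
      β * ‖v‖ ^ 2 ≤
        (inner ℂ ((Matrix.toEuclideanCLM (𝕜 := ℂ) (A' ξ)) v) v : ℂ).re)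
    (α : ℝ) (hα : 0 < α) :
    volume {ξ ∈ J | ¬ IsUnit (A ξ) ∨
        α⁻¹ ≤ ‖(Matrix.toEuclideanCLM (𝕜 := ℂ) ((A ξ)⁻¹) :
          EuclideanSpace ℂ (Fin n) →L[ℂ] EuclideanSpace ℂ (Fin n))‖} ≤
      ENNReal.ofReal (2 * n * α * β⁻¹) := by
  classical
  have hT : ∀ ξ ∈ J, (Matrix.toEuclideanLin (A ξ)).IsSymmetric :=
    fun ξ hξ => Matrix.isSymmetric_toEuclideanLin_iff.2 (hherm ξ hξ)
  have hn : finrank ℂ (EuclideanSpace ℂ (Fin n)) = n := finrank_euclideanSpace_fin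
  let N : ℝ → ℕ := fun ξ => if h : ξ ∈ J then #{i | α < (hT ξ h).eigenvalues hn i} else 0
  have hδ : 0 < 2 * α * β⁻¹ := by positivity
  refine (volume_le_of_strictMono_across_gaps (N := N) (n := n) (δ := 2 * α * β⁻¹) ?_ ?_).trans_eq
    ?_
  · rintro ξ ⟨hξ, hbad⟩
    obtain ⟨i, hi⟩ := Matrix.exists_abs_eigenvalues_le (hT ξ hξ) hn hα hbad
    simp only [N, dif_pos hξ]
    refine (card_lt_card (filter_ssubset.2 ⟨i, mem_univ _, ?_⟩)).trans_eq (card_fin n)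
    exact not_lt.2 ((le_abs_self _).trans hi)
  · rintro x ⟨hx, hbad⟩ y ⟨hy, -⟩ hxy
    obtain ⟨i, hi⟩ := Matrix.exists_abs_eigenvalues_le (hT x hx) hn hα hbad
    simp only [N, dif_pos hx, dif_pos hy]
    refine (hT y hy).card_lt_eigenvalues_lt_of_le_add hn (hT x hx) ?_
      (Matrix.re_inner_toEuclideanCLM_add_le hJ hderiv hpos hx hy (by linarith)) hi
    rw [mul_comm β]
    exact (mul_inv_lt_iff₀ hβ).1 (by linarith)
  · rw [← ENNReal.ofReal_natCast, ← ENNReal.ofReal_mul (Nat.cast_nonneg n)]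
    ring_nf

/-- If `A ξ` is a `C¹` family of Hermitian `n × n` matrices on an interval `J` with
`∂_ξ A(ξ) ≥ β I` (β > 0) in the sense of quadratic forms, then for any `α > 0` the
set of `ξ ∈ J` where `A ξ` is not invertible or `‖A(ξ)⁻¹‖ ≥ α⁻¹` has Lebesgue
measure at most `2 n α β⁻¹`. -/
theorem measure_small_inverse_le
    (n : ℕ) (J : Set ℝ) (hJ : J.OrdConnected)
    (A A' : ℝ → Matrix (Fin n) (Fin n) ℂ)
    (hherm : ∀ ξ ∈ J, (A ξ).IsHermitian)
    (hderiv : ∀ ξ ∈ J, ∀ i j, HasDerivWithinAt (fun t => A t i j) (A' ξ i j) J ξ)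
    (hderiv_cont : ∀ i j, ContinuousOn (fun t => A' t i j) J)
    (β : ℝ) (hβ : 0 < β)
    (hpos : ∀ ξ ∈ J, ∀ v : EuclideanSpace ℂ (Fin n),
      β * ‖v‖ ^ 2 ≤
        (inner ℂ ((Matrix.toEuclideanCLM (𝕜 := ℂ) (A' ξ)) v) v : ℂ).re)
    (α : ℝ) (hα : 0 < α) :
    volume {ξ ∈ J | ¬ IsUnit (A ξ) ∨
        α⁻¹ ≤ ‖(Matrix.toEuclideanCLM (𝕜 := ℂ) ((A ξ)⁻¹) :
          EuclideanSpace ℂ (Fin n) →L[ℂ] EuclideanSpace ℂ (Fin n))‖} ≤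
      ENNReal.ofReal (2 * n * α * β⁻¹) :=
  measure_small_inverse_le_general n J hJ A A' hherm hderiv β hβ hpos α hα
end

section
/- For every τ₀ > ν(ν+1) - 1, the Lebesgue measure of the set of ω ∈ ℝ^ν with |ω| ≤ 1 for which there exists a nonzero integer vector p = (p_{ij})_{1≤i≤j≤ν} with |∑_{1≤i≤j≤ν} ω_i ω_j p_{ij}| < γ₀/|p|^{τ₀} is O(γ₀^{1/2}) as γ₀ → 0. Equivalently, the complement of the set of ω in the unit ball satisfying |∑_{1≤i≤j≤ν} ω_i ω_j p_{ij}| ≥ γ₀/|p|^{τ₀} for all nonzero integer p has measure at most C·γ₀^{1/2} for some constant C depending only on ν and τ₀. -/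
/-!
Fix a nonzero `p` and let `N = |p|` be attained at the entry `(i₀, j₀)`. Along the direction
`e_{i₀}` if `i₀ = j₀`, and `e_{j₀} ± e_{i₀}` (for the better sign) otherwise, the quadratic form
`Q_p(ω) = ∑_{i ≤ j} p_{ij} ω_i ω_j` restricts to one-variable quadratics with leading coefficient
at least `N` in absolute value. A sublevel set `{t | |a t² + b t + c| < ε}` has length at most
`4 √(ε / |a|)`, so after a volume-preserving shear Fubini gives
`vol {ω in the unit ball | |Q_p(ω)| < γ₀ / N^τ₀} ≲ √γ₀ N^{-(τ₀+1)/2}`.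
With `d = ν(ν+1)/2` and `r = (τ₀+1)/(2d) > 1`, every `|p_{ij}| ≤ N` gives
`N^{-(τ₀+1)/2} ≤ ∏_{i ≤ j} max(1, |p_{ij}|)^{-r}`, and the sum of the right-hand side over
`p ∈ ℤ^d` factors as `(∑_{z ∈ ℤ} max(1, |z|)^{-r})^d < ∞`.
-/

open MeasureTheory

/-- Sup norm of an integer vector `p = (p_{ij})_{1 ≤ i ≤ j ≤ ν}` (entries with
`¬ i ≤ j` are ignored). -/
noncomputable def pSupNorm {ν : ℕ} (p : Fin ν → Fin ν → ℤ) : ℕ :=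
  Finset.univ.sup fun q : Fin ν × Fin ν => if q.1 ≤ q.2 then (p q.1 q.2).natAbs else 0

open scoped ENNReal
open Matrix

theorem volume_abs_quadratic_lt_le {a : ℝ} (ha : a ≠ 0) (b c ε : ℝ) :
    volume {t : ℝ | |a * t ^ 2 + b * t + c| < ε} ≤ ENNReal.ofReal (4 * √(ε / |a|)) := by
  set r := -b / (2 * a)
  set u := r ^ 2 - c / a
  set w := √u
  set δ := √(ε / |a|)
  have hsub : {t : ℝ | |a * t ^ 2 + b * t + c| < ε} ⊆
      Metric.ball (r + w) δ ∪ Metric.ball (r - w) δ := by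
    intro t ht
    have hcomplete : a * t ^ 2 + b * t + c = a * ((t - r) ^ 2 - u) := by
      simp only [r, u]; field_simp; ring
    -- `w ^ 2 = max u 0`, so replacing `u` by `w ^ 2` can only decrease `|(t - r) ^ 2 - u|`
    have hw : |(t - (r + w)) * (t - (r - w))| ≤ |(t - r) ^ 2 - u| := by
      rcases le_or_gt 0 u with hu | hu
      · rw [show (t - (r + w)) * (t - (r - w)) = (t - r) ^ 2 - w ^ 2 by ring, Real.sq_sqrt hu]
      · rw [show w = 0 from Real.sqrt_eq_zero'.2 hu.le, abs_of_nonneg (by nlinarith),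
          abs_of_nonneg (by nlinarith)]
        nlinarith
    have hlt : |a| * |(t - (r + w)) * (t - (r - w))| < ε := by
      refine lt_of_le_of_lt (mul_le_mul_of_nonneg_left hw (abs_nonneg a)) ?_
      rwa [← abs_mul, ← hcomplete]
    have hδ : δ ^ 2 = ε / |a| := Real.sq_sqrt (div_nonneg (by
      nlinarith [abs_nonneg a, abs_nonneg ((t - (r + w)) * (t - (r - w)))]) (abs_nonneg a))
    rw [abs_mul] at hlt
    by_contra hout
    simp only [Set.mem_union, Metric.mem_ball, Real.dist_eq, not_or, not_lt] at hout
    have : ε ≤ |a| * (|t - (r + w)| * |t - (r - w)|) := by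
      rw [← div_le_iff₀' (abs_pos.2 ha), ← hδ, sq]
      exact mul_le_mul hout.1 hout.2 (Real.sqrt_nonneg _) (abs_nonneg _)
    linarith
  calc volume {t : ℝ | |a * t ^ 2 + b * t + c| < ε}
      ≤ volume (Metric.ball (r + w) δ) + volume (Metric.ball (r - w) δ) :=
        (measure_mono hsub).trans (measure_union_le _ _)
    _ = ENNReal.ofReal (4 * δ) := by
        have hδ : 0 ≤ δ := Real.sqrt_nonneg _
        rw [Real.volume_ball, Real.volume_ball, ← ENNReal.ofReal_add (by linarith) (by linarith)]
        ring_nf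

theorem volume_le_mul_of_volume_slice_le {n : ℕ} (i : Fin (n + 1)) {s : Set (Fin (n + 1) → ℝ)}
    (hs : MeasurableSet s) {K : Set (Fin n → ℝ)} (hK : ∀ x ∈ s, i.removeNth x ∈ K) {R : ℝ≥0∞}
    (hR : ∀ y, volume {t : ℝ | i.insertNth t y ∈ s} ≤ R) : volume s ≤ R * volume K := by
  let e := MeasurableEquiv.piFinSuccAbove (fun _ : Fin (n + 1) => ℝ) i
  have he : MeasurePreserving e := volume_preserving_piFinSuccAbove _ i
  have hslice :
      ∀ y, volume ((fun t => (t, y)) ⁻¹' (e.symm ⁻¹' s)) ≤ K.indicator (fun _ => R) y := by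
    intro y
    by_cases hy : y ∈ K
    · rw [Set.indicator_of_mem hy]
      exact hR y
    · rw [Set.indicator_of_notMem hy, nonpos_iff_eq_zero, measure_eq_zero_iff_ae_notMem]
      refine Filter.Eventually.of_forall fun t ht => hy ?_
      simpa [e, Fin.insertNthEquiv, Fin.removeNth_insertNth] using hK _ ht
  calc volume s = volume (e.symm ⁻¹' s) := ((he.symm e).measure_preimage_equiv s).symm
    _ = ∫⁻ y, volume ((fun t => (t, y)) ⁻¹' (e.symm ⁻¹' s)) :=
        Measure.prod_apply_symm (e.symm.measurable hs)
    _ ≤ ∫⁻ y, K.indicator (fun _ => R) y := lintegral_mono hslice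
    _ ≤ R * volume K := lintegral_indicator_const_le K R

theorem Fin.insertNth_eq_insertNth_zero_add {n : ℕ} (j : Fin (n + 1)) (t : ℝ) (y : Fin n → ℝ) :
    j.insertNth t y = j.insertNth 0 y + t • Pi.single j 1 := by
  ext k
  rcases eq_or_ne k j with rfl | hk
  · simp
  · obtain ⟨k, rfl⟩ := Fin.exists_succAbove_eq hk
    simp [hk]

theorem dotProduct_mulVec_add_smul {ι : Type*} [Fintype ι] (M : Matrix ι ι ℝ) (x v : ι → ℝ)
    (t : ℝ) : (x + t • v) ⬝ᵥ M *ᵥ (x + t • v) =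
      (v ⬝ᵥ M *ᵥ v) * t ^ 2 + (x ⬝ᵥ M *ᵥ v + v ⬝ᵥ M *ᵥ x) * t + x ⬝ᵥ M *ᵥ x := by
  simp only [mulVec_add, mulVec_smul, dotProduct_add, add_dotProduct, dotProduct_smul,
    smul_dotProduct, smul_eq_mul]
  ring

theorem measurableSet_sublevel {ι : Type*} [Fintype ι] (M : Matrix ι ι ℝ) (R ε : ℝ) :
    MeasurableSet {x : ι → ℝ | ‖x‖ ≤ R ∧ |x ⬝ᵥ M *ᵥ x| < ε} :=
  (isClosed_le continuous_norm continuous_const).measurableSet.inter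
    (isOpen_lt (f := fun x : ι → ℝ => |x ⬝ᵥ M *ᵥ x|) (by fun_prop) continuous_const).measurableSet

theorem volume_sublevel_le_of_le_abs_diag {n : ℕ} (M : Matrix (Fin (n + 1)) (Fin (n + 1)) ℝ)
    {j : Fin (n + 1)} {a : ℝ} (ha : 0 < a) (hMj : a ≤ |M j j|) {R ε : ℝ} (hR : 0 ≤ R)
    (hε : 0 ≤ ε) :
    volume {x : Fin (n + 1) → ℝ | ‖x‖ ≤ R ∧ |x ⬝ᵥ M *ᵥ x| < ε} ≤
      ENNReal.ofReal (4 * √(ε / a)) * ENNReal.ofReal ((2 * R) ^ n) := by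
  set s := {x : Fin (n + 1) → ℝ | ‖x‖ ≤ R ∧ |x ⬝ᵥ M *ᵥ x| < ε}
  have hK : ∀ x ∈ s, j.removeNth x ∈ Metric.closedBall 0 R := fun x hx =>
    mem_closedBall_zero_iff.2 <| (pi_norm_le_iff_of_nonneg hR).2 fun k =>
      (norm_le_pi_norm x _).trans hx.1
  have hMj0 : M j j ≠ 0 := abs_pos.1 (ha.trans_le hMj)
  refine (volume_le_mul_of_volume_slice_le (R := ENNReal.ofReal (4 * √(ε / a))) j
    (measurableSet_sublevel M R ε) hK fun y => ?_).trans_eq ?_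
  · obtain ⟨b, c, hbc⟩ : ∃ b c : ℝ, ∀ t : ℝ,
        j.insertNth t y ⬝ᵥ M *ᵥ j.insertNth t y = M j j * t ^ 2 + b * t + c :=
      ⟨_, _, fun t => by
        rw [Fin.insertNth_eq_insertNth_zero_add, dotProduct_mulVec_add_smul, single_dotProduct,
          mulVec_single_one, one_mul]
        rfl⟩
    have hslice : {t : ℝ | j.insertNth t y ∈ s} ⊆ {t : ℝ | |M j j * t ^ 2 + b * t + c| < ε} :=
      fun t ht => show _ < ε by rw [← hbc]; exact ht.2
    refine (measure_mono hslice).trans <| (volume_abs_quadratic_lt_le hMj0 _ _ _).trans ?_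
    gcongr
  · rw [Real.volume_pi_closedBall _ hR, Fintype.card_fin]

theorem volume_sublevel_le_of_measurePreserving {ι : Type*} [Fintype ι] (M A : Matrix ι ι ℝ)
    (hA : MeasurePreserving (A *ᵥ ·)) (hAx : ∀ x, ‖x‖ ≤ 2 * ‖A *ᵥ x‖) (ε : ℝ) :
    volume {x : ι → ℝ | ‖x‖ ≤ 1 ∧ |x ⬝ᵥ M *ᵥ x| < ε} ≤
      volume {x : ι → ℝ | ‖x‖ ≤ 2 ∧ |x ⬝ᵥ (Aᵀ * M * A) *ᵥ x| < ε} := by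
  rw [← hA.measure_preimage (measurableSet_sublevel M 1 ε).nullMeasurableSet]
  refine measure_mono fun x ⟨hx₁, hx₂⟩ => ⟨(hAx x).trans (by linarith), ?_⟩
  simpa [dotProduct_mulVec, vecMul_vecMul, ← mulVec_mulVec, vecMul_transpose] using hx₂

theorem Matrix.transvection_mulVec {ι : Type*} [Fintype ι] [DecidableEq ι] (i j : ι) (c : ℝ)
    (x : ι → ℝ) : transvection i j c *ᵥ x = x + (c * x j) • Pi.single i 1 := by
  ext k
  simp [transvection, add_mulVec, single_mulVec, Pi.single_apply, Function.update_apply]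

theorem Matrix.transvection_transpose_mul_mul_transvection_apply_self {ι : Type*} [Fintype ι]
    [DecidableEq ι] (M : Matrix ι ι ℝ) (i j : ι) (c : ℝ) :
    ((transvection i j c)ᵀ * M * transvection i j c) j j =
      M j j + c * (M i j + M j i) + c ^ 2 * M i i := by
  simp [transvection, Matrix.mul_apply, Matrix.single, Matrix.one_apply, add_mul, mul_add,
    Finset.sum_add_distrib, mul_ite, ite_mul]
  ring

theorem Matrix.norm_le_two_mul_norm_transvection_mulVec {ι : Type*} [Fintype ι] [DecidableEq ι]
    {i j : ι} (hij : i ≠ j) {c : ℝ} (hc : |c| ≤ 1) (x : ι → ℝ) :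
    ‖x‖ ≤ 2 * ‖transvection i j c *ᵥ x‖ := by
  have hxj : x j = (transvection i j c *ᵥ x) j := by
    simp [transvection_mulVec, hij.symm]
  calc ‖x‖ = ‖transvection i j c *ᵥ x - (c * x j) • Pi.single i 1‖ := by
        rw [transvection_mulVec, add_sub_cancel_right]
    _ ≤ ‖transvection i j c *ᵥ x‖ + |c| * ‖x j‖ := by
        refine (norm_sub_le _ _).trans ?_
        rw [norm_smul, Pi.norm_single, norm_one, mul_one, norm_mul, Real.norm_eq_abs]
    _ ≤ ‖transvection i j c *ᵥ x‖ + 1 * ‖transvection i j c *ᵥ x‖ := by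
        rw [hxj]
        gcongr
        exact norm_le_pi_norm _ _
    _ = 2 * ‖transvection i j c *ᵥ x‖ := by ring

theorem exists_abs_eq_one_abs_le_abs_add_mul (a b : ℝ) : ∃ c : ℝ, |c| = 1 ∧ |b| ≤ |a + c * b| := by
  by_contra! h
  have h₁ := h 1 abs_one
  have h₂ := h (-1) (by simp)
  have : |2 * b| ≤ |a + 1 * b| + |a + -1 * b| := by
    calc |2 * b| = |(a + 1 * b) - (a + -1 * b)| := by ring_nf
      _ ≤ _ := abs_sub _ _
  rw [abs_mul, abs_two] at this
  linarith

def upperMatrix {ν : ℕ} (p : Fin ν → Fin ν → ℤ) : Matrix (Fin ν) (Fin ν) ℝ :=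
  Matrix.of fun i j => if i ≤ j then (p i j : ℝ) else 0

theorem sum_upper_eq_dotProduct_upperMatrix {ν : ℕ} (p : Fin ν → Fin ν → ℤ) (x : Fin ν → ℝ) :
    (∑ i, ∑ j, if i ≤ j then (p i j : ℝ) * x i * x j else 0) = x ⬝ᵥ upperMatrix p *ᵥ x := by
  simp only [dotProduct, mulVec, upperMatrix, of_apply, Finset.mul_sum]
  refine Finset.sum_congr rfl fun i _ => Finset.sum_congr rfl fun j _ => ?_
  split_ifs <;> ring

theorem exists_shear_upperMatrix {ν : ℕ} (p : Fin ν → Fin ν → ℤ) {i₀ j₀ : Fin ν} (h : i₀ ≤ j₀) :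
    ∃ (A : Matrix (Fin ν) (Fin ν) ℝ) (j : Fin ν), MeasurePreserving (A *ᵥ ·) ∧
      (∀ x, ‖x‖ ≤ 2 * ‖A *ᵥ x‖) ∧ |(p i₀ j₀ : ℝ)| ≤ |(Aᵀ * upperMatrix p * A) j j| := by
  rcases h.eq_or_lt with rfl | hlt
  · refine ⟨1, i₀, by simp only [one_mulVec]; exact MeasurePreserving.id volume, fun x => ?_, ?_⟩
    · rw [one_mulVec]; linarith [norm_nonneg x]
    · simp [upperMatrix]
  · obtain ⟨c, hc, hle⟩ := exists_abs_eq_one_abs_le_abs_add_mul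
      (p i₀ i₀ + p j₀ j₀ : ℝ) (p i₀ j₀)
    refine ⟨transvection i₀ j₀ c, j₀, Real.volume_preserving_transvectionStruct ⟨i₀, j₀, hlt.ne, c⟩,
      norm_le_two_mul_norm_transvection_mulVec hlt.ne hc.le, ?_⟩
    have hc2 : c ^ 2 = 1 := by rw [← sq_abs, hc, one_pow]
    rw [transvection_transpose_mul_mul_transvection_apply_self]
    simpa [upperMatrix, hlt.le, not_le.2 hlt, hc2, add_comm, add_left_comm, add_assoc] using hle

theorem natAbs_le_pSupNorm {ν : ℕ} (p : Fin ν → Fin ν → ℤ) {i j : Fin ν} (h : i ≤ j) :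
    (p i j).natAbs ≤ pSupNorm p := by
  have := Finset.le_sup (f := fun q : Fin ν × Fin ν =>
    if q.1 ≤ q.2 then (p q.1 q.2).natAbs else 0) (Finset.mem_univ (i, j))
  rwa [if_pos h] at this

theorem exists_le_and_pSupNorm_eq {ν : ℕ} {p : Fin ν → Fin ν → ℤ} (hp : 0 < pSupNorm p) :
    ∃ i j, i ≤ j ∧ (pSupNorm p : ℝ) = |(p i j : ℝ)| := by
  obtain ⟨q, -, hq⟩ := Finset.lt_sup_iff.1 hp
  obtain ⟨⟨i, j⟩, -, hmax⟩ := Finset.exists_mem_eq_sup _ ⟨q, Finset.mem_univ q⟩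
    fun q : Fin ν × Fin ν => if q.1 ≤ q.2 then (p q.1 q.2).natAbs else 0
  have hij : i ≤ j := by
    by_contra h
    simp only [pSupNorm, hmax, h, if_false] at hp
    exact hp.false
  refine ⟨i, j, hij, ?_⟩
  simp [pSupNorm, hmax, hij, Nat.cast_natAbs]

theorem volume_sublevel_upperMatrix_le {n : ℕ} {p : Fin (n + 1) → Fin (n + 1) → ℤ}
    (hp : 0 < pSupNorm p) {ε : ℝ} (hε : 0 ≤ ε) :
    volume {x : Fin (n + 1) → ℝ | ‖x‖ ≤ 1 ∧ |x ⬝ᵥ upperMatrix p *ᵥ x| < ε} ≤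
      ENNReal.ofReal (4 ^ (n + 1) * √(ε / pSupNorm p)) := by
  obtain ⟨i₀, j₀, hle, hN⟩ := exists_le_and_pSupNorm_eq hp
  obtain ⟨A, j, hA, hAx, hAj⟩ := exists_shear_upperMatrix p hle
  calc _ ≤ _ := volume_sublevel_le_of_measurePreserving _ A hA hAx ε
    _ ≤ ENNReal.ofReal (4 * √(ε / pSupNorm p)) * ENNReal.ofReal ((2 * 2) ^ n) :=
        volume_sublevel_le_of_le_abs_diag _ (by exact_mod_cast hp) (hN ▸ hAj) zero_le_two hε
    _ = _ := by rw [← ENNReal.ofReal_mul (by positivity)]; ring_nf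

theorem volume_euclidean_le_volume_pi {ι : Type*} [Fintype ι] (s : Set (ι → ℝ)) :
    volume {ω : EuclideanSpace ℝ ι | ‖ω‖ ≤ 1 ∧ ω.ofLp ∈ s} ≤
      volume {x : ι → ℝ | ‖x‖ ≤ 1 ∧ x ∈ s} := by
  rw [← (EuclideanSpace.volume_preserving_symm_measurableEquiv_toLp ι).measure_preimage_equiv]
  exact measure_mono fun ω ⟨hω, hs⟩ => ⟨(pi_norm_le_iff_of_nonneg zero_le_one).2 fun k =>
    (PiLp.norm_apply_le ω k).trans hω, hs⟩

abbrev UpperIndex (ν : ℕ) := {q : Fin ν × Fin ν // q.1 ≤ q.2}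

def ofUpper {ν : ℕ} (c : UpperIndex ν → ℤ) : Fin ν → Fin ν → ℤ :=
  fun i j => if h : i ≤ j then c ⟨(i, j), h⟩ else 0

theorem two_mul_card_upperIndex (ν : ℕ) : 2 * Fintype.card (UpperIndex ν) = ν * (ν + 1) := by
  rw [← Fintype.card_congr Sym2.sortEquiv, Sym2.card, Fintype.card_fin, Nat.choose_two_right,
    Nat.add_sub_cancel, mul_comm (ν + 1), Nat.mul_div_cancel' (Nat.even_mul_succ_self ν).two_dvd]

theorem upperMatrix_ofUpper_restrict {ν : ℕ} (p : Fin ν → Fin ν → ℤ) :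
    upperMatrix (ofUpper fun e : UpperIndex ν => p e.1.1 e.1.2) = upperMatrix p := by
  ext i j
  by_cases h : i ≤ j <;> simp [upperMatrix, ofUpper, h]

theorem pSupNorm_ofUpper_restrict {ν : ℕ} (p : Fin ν → Fin ν → ℤ) :
    pSupNorm (ofUpper fun e : UpperIndex ν => p e.1.1 e.1.2) = pSupNorm p := by
  refine Finset.sup_congr rfl fun q _ => ?_
  by_cases h : q.1 ≤ q.2 <;> simp [ofUpper, h]

theorem natAbs_le_pSupNorm_ofUpper {ν : ℕ} (c : UpperIndex ν → ℤ) (e : UpperIndex ν) :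
    (c e).natAbs ≤ pSupNorm (ofUpper c) := by
  simpa [ofUpper, e.2] using natAbs_le_pSupNorm (ofUpper c) e.2

theorem rpow_neg_mul_card_le_prod {κ : Type*} [Fintype κ] {N r : ℝ} (hN : 1 ≤ N) (hr : 0 ≤ r)
    (x : κ → ℝ) (hx : ∀ e, |x e| ≤ N) :
    N ^ (-(r * Fintype.card κ)) ≤ ∏ e, max 1 |x e| ^ (-r) := by
  rw [neg_mul_eq_neg_mul, Real.rpow_mul_natCast (by linarith), ← Finset.card_univ,
    ← Finset.prod_const]
  exact Finset.prod_le_prod (fun _ _ => by positivity) fun e _ =>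
    Real.rpow_le_rpow_of_nonpos (by positivity) (max_le hN (hx e)) (by linarith)

theorem tsum_prod_le_tsum_pow {κ α : Type*} [Fintype κ] (g : α → ℝ≥0∞) :
    ∑' c : κ → α, ∏ e, g (c e) ≤ (∑' a, g a) ^ Fintype.card κ := by
  classical
  rw [ENNReal.tsum_eq_iSup_sum]
  refine iSup_le fun S => ?_
  calc ∑ c ∈ S, ∏ e, g (c e)
      ≤ ∑ c ∈ Fintype.piFinset fun e => S.image (· e), ∏ e, g (c e) :=
        Finset.sum_le_sum_of_subset fun c hc =>
          Fintype.mem_piFinset.2 fun e => Finset.mem_image_of_mem _ hc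
    _ = ∏ e : κ, ∑ a ∈ S.image (· e), g a := (Finset.prod_univ_sum _ _).symm
    _ ≤ ∏ _e : κ, ∑' a, g a := Finset.prod_le_prod' fun e _ => ENNReal.sum_le_tsum _
    _ = (∑' a, g a) ^ Fintype.card κ := by rw [Finset.prod_const, Finset.card_univ]

theorem tsum_ofReal_max_one_abs_rpow_neg_ne_top {r : ℝ} (hr : 1 < r) :
    ∑' z : ℤ, ENNReal.ofReal (max 1 |(z : ℝ)| ^ (-r)) ≠ ⊤ := by
  have hsum : Summable fun z : ℤ => max 1 |(z : ℝ)| ^ (-r) := by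
    refine Real.summable_abs_int_rpow hr |>.of_norm_bounded_eventually ?_
    filter_upwards [(Set.finite_singleton (0 : ℤ)).compl_mem_cofinite] with z hz
    have hz1 : 1 ≤ |(z : ℝ)| := by
      exact_mod_cast Int.one_le_abs (by simpa using hz)
    rw [max_eq_right hz1, Real.norm_eq_abs, abs_of_nonneg (by positivity)]
  rw [← ENNReal.ofReal_tsum_of_nonneg (fun _ => by positivity) hsum]
  exact ENNReal.ofReal_ne_top

theorem sqrt_div_rpow_div_self {γ N τ : ℝ} (hN : 0 < N) :
    √(γ / N ^ τ / N) = √γ * N ^ (-((τ + 1) / 2)) := by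
  rw [div_div, ← Real.rpow_add_one hN.ne', Real.sqrt_div' _ (by positivity),
    Real.sqrt_eq_rpow (N ^ _), ← Real.rpow_mul hN.le, Real.rpow_neg hN.le, div_eq_mul_inv]
  ring_nf

theorem volume_sublevel_ofUpper_le {n : ℕ} {τ₀ r γ₀ : ℝ} (hr : 0 ≤ r)
    (hτ₀ : (τ₀ + 1) / 2 = r * Fintype.card (UpperIndex (n + 1))) (hγ₀ : 0 ≤ γ₀)
    (c : UpperIndex (n + 1) → ℤ) :
    volume {ω : EuclideanSpace ℝ (Fin (n + 1)) | ‖ω‖ ≤ 1 ∧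
        ω.ofLp ∈ {x | 0 < pSupNorm (ofUpper c) ∧
          |x ⬝ᵥ upperMatrix (ofUpper c) *ᵥ x| < γ₀ / (pSupNorm (ofUpper c) : ℝ) ^ τ₀}} ≤
      ENNReal.ofReal (4 ^ (n + 1) * √γ₀) * ∏ e, ENNReal.ofReal (max 1 |(c e : ℝ)| ^ (-r)) := by
  rcases Nat.eq_zero_or_pos (pSupNorm (ofUpper c)) with h0 | hpos
  · simp [h0]
  set N := pSupNorm (ofUpper c)
  have hN : (1 : ℝ) ≤ N := by exact_mod_cast hpos
  calc _ ≤ volume {x : Fin (n + 1) → ℝ | ‖x‖ ≤ 1 ∧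
          |x ⬝ᵥ upperMatrix (ofUpper c) *ᵥ x| < γ₀ / (N : ℝ) ^ τ₀} :=
        (volume_euclidean_le_volume_pi _).trans (measure_mono fun x hx => ⟨hx.1, hx.2.2⟩)
    _ ≤ ENNReal.ofReal (4 ^ (n + 1) * √(γ₀ / (N : ℝ) ^ τ₀ / N)) :=
        volume_sublevel_upperMatrix_le hpos (by positivity)
    _ ≤ ENNReal.ofReal (4 ^ (n + 1) * √γ₀ * ∏ e, max 1 |(c e : ℝ)| ^ (-r)) := by
        rw [sqrt_div_rpow_div_self (by positivity), hτ₀, ← mul_assoc]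
        gcongr
        refine rpow_neg_mul_card_le_prod hN hr _ fun e => ?_
        rw [Int.cast_abs.symm.trans (Nat.cast_natAbs _).symm]
        exact_mod_cast natAbs_le_pSupNorm_ofUpper c e
    _ = _ := by
        rw [ENNReal.ofReal_mul (by positivity),
          ENNReal.ofReal_prod_of_nonneg fun _ _ => by positivity]

theorem volume_nonDiophantine_le {n : ℕ} {τ₀ r γ₀ : ℝ} (hr : 0 ≤ r)
    (hτ₀ : (τ₀ + 1) / 2 = r * Fintype.card (UpperIndex (n + 1))) (hγ₀ : 0 ≤ γ₀) :
    volume {ω : EuclideanSpace ℝ (Fin (n + 1)) | ‖ω‖ ≤ 1 ∧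
        ∃ p : Fin (n + 1) → Fin (n + 1) → ℤ, (∃ i j, i ≤ j ∧ p i j ≠ 0) ∧
          |∑ i, ∑ j, if i ≤ j then (p i j : ℝ) * ω i * ω j else 0| <
            γ₀ / (pSupNorm p : ℝ) ^ τ₀} ≤
      ENNReal.ofReal (4 ^ (n + 1) * √γ₀) *
        (∑' z : ℤ, ENNReal.ofReal (max 1 |(z : ℝ)| ^ (-r))) ^
          Fintype.card (UpperIndex (n + 1)) := by
  -- `p` only matters through its entries with `i ≤ j`; indexing by those makes the sum converge
  refine ((measure_mono ?_).trans (measure_iUnion_le _)).trans <|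
    (ENNReal.tsum_le_tsum (volume_sublevel_ofUpper_le hr hτ₀ hγ₀)).trans ?_
  · rintro ω ⟨hω, p, ⟨i, j, hij, hp⟩, hlt⟩
    refine Set.mem_iUnion.2 ⟨fun e => p e.1.1 e.1.2, hω, ?_, ?_⟩
    · rw [pSupNorm_ofUpper_restrict]
      exact (Int.natAbs_pos.2 hp).trans_le (natAbs_le_pSupNorm p hij)
    · rwa [upperMatrix_ofUpper_restrict, pSupNorm_ofUpper_restrict,
        ← sum_upper_eq_dotProduct_upperMatrix]
  · rw [ENNReal.tsum_mul_left]
    gcongr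
    exact tsum_prod_le_tsum_pow _

theorem quadratic_diophantine_measure_general
    (ν : ℕ) (τ₀ : ℝ) (hτ₀ : (ν : ℝ) * (ν + 1) - 1 < τ₀) :
    ∃ C : ℝ, 0 < C ∧ ∀ γ₀ : ℝ, γ₀ ∈ Set.Ioo (0 : ℝ) 1 →
      volume {ω : EuclideanSpace ℝ (Fin ν) | ‖ω‖ ≤ 1 ∧
          ∃ p : Fin ν → Fin ν → ℤ, (∃ i j, i ≤ j ∧ p i j ≠ 0) ∧
            |∑ i, ∑ j, if i ≤ j then (p i j : ℝ) * ω i * ω j else 0| <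
              γ₀ / (pSupNorm p : ℝ) ^ τ₀} ≤
        ENNReal.ofReal (C * Real.sqrt γ₀) := by
  obtain _ | n := ν
  · exact ⟨1, one_pos, fun γ₀ _ => by simp⟩
  set d := Fintype.card (UpperIndex (n + 1))
  have hd : (2 * d : ℝ) = (n + 1) * (n + 2) := by
    exact_mod_cast two_mul_card_upperIndex (n + 1)
  have hd0 : (0 : ℝ) < d := by nlinarith
  set r := (τ₀ + 1) / 2 / d
  have hr : 1 < r := by
    rw [lt_div_iff₀ hd0, one_mul, lt_div_iff₀ two_pos]
    push_cast at hτ₀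
    linarith
  set Z := ∑' z : ℤ, ENNReal.ofReal (max 1 |(z : ℝ)| ^ (-r))
  have hZ : Z ^ d ≠ ⊤ := ENNReal.pow_ne_top (tsum_ofReal_max_one_abs_rpow_neg_ne_top hr)
  refine ⟨4 ^ (n + 1) * ((Z ^ d).toReal + 1), by positivity, fun γ₀ hγ₀ => ?_⟩
  calc _ ≤ ENNReal.ofReal (4 ^ (n + 1) * √γ₀) * Z ^ d :=
        volume_nonDiophantine_le (by positivity) (div_mul_cancel₀ _ hd0.ne').symm hγ₀.1.le
    _ = ENNReal.ofReal (4 ^ (n + 1) * √γ₀ * (Z ^ d).toReal) := by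
        rw [ENNReal.ofReal_mul (p := 4 ^ (n + 1) * √γ₀) (by positivity), ENNReal.ofReal_toReal hZ]
    _ ≤ _ := by
        have : 0 ≤ 4 ^ (n + 1) * √γ₀ := by positivity
        exact ENNReal.ofReal_le_ofReal (by linarith)

/-- For `τ₀ > ν(ν+1) - 1`, the set of `ω` in the unit ball of `ℝ^ν` for which the
quadratic Diophantine condition
`|∑_{1≤i≤j≤ν} ω_i ω_j p_{ij}| ≥ γ₀ / |p|^{τ₀}` fails for some nonzero integer
vector `p` has Lebesgue measure `O(γ₀^{1/2})`. -/
theorem quadratic_diophantine_measure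
    (ν : ℕ) (hν : 1 ≤ ν) (τ₀ : ℝ) (hτ₀ : (ν : ℝ) * (ν + 1) - 1 < τ₀) :
    ∃ C : ℝ, 0 < C ∧ ∀ γ₀ : ℝ, γ₀ ∈ Set.Ioo (0 : ℝ) 1 →
      volume {ω : EuclideanSpace ℝ (Fin ν) | ‖ω‖ ≤ 1 ∧
          ∃ p : Fin ν → Fin ν → ℤ, (∃ i j, i ≤ j ∧ p i j ≠ 0) ∧
            |∑ i, ∑ j, if i ≤ j then (p i j : ℝ) * ω i * ω j else 0| <
              γ₀ / (pSupNorm p : ℝ) ^ τ₀} ≤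
        ENNReal.ofReal (C * Real.sqrt γ₀) :=
  quadratic_diophantine_measure_general ν τ₀ hτ₀
end

section
/- Let ω̄ ∈ ℝ^ν satisfy |ω̄·l| ≥ 2γ₀/|l|^ν for all nonzero l ∈ ℤ^ν. For λ ∈ [1/2, 3/2], N₀ ∈ ℕ, γ ∈ (0,1), τ₁ > 3ν + d, and real numbers μ̂_j (j ∈ ℤ^d, |j| ≤ N₀) with |μ̂_j| > β₀ > 0 for all j, define the resonant sets R_{l,j} := {λ ∈ [1/2,3/2] : |λ²(ω̄·l)² - μ̂_j| < γ N₀^{-τ₁}} for |l|, |j| ≤ N₀. If γN₀^{-τ₁} < β₀, then R_{0,j} = ∅ for all j, and for l ≠ 0 each R_{l,j} has measure at most C·γ₀^{-2}·γ·N₀^{-τ₁+2ν}; consequently |⋃_{|l|,|j|≤N₀} R_{l,j}| ≤ C'·γ·γ₀^{-2}·N₀^{d+3ν-τ₁} = O(γ). -/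
open MeasureTheory

/-- Sup norm of an integer vector. -/
def intSupNorm {n : ℕ} (l : Fin n → ℤ) : ℕ :=
  Finset.univ.sup fun k => (l k).natAbs

/-- The resonant set `R_{l,j} = {λ ∈ [1/2,3/2] : |λ²(ω̄·l)² - μ̂_j| < γ N₀^{-τ₁}}`. -/
noncomputable def resonantSet {ν d : ℕ} (ω : Fin ν → ℝ) (μhat : (Fin d → ℤ) → ℝ)
    (γ τ₁ : ℝ) (N₀ : ℕ) (l : Fin ν → ℤ) (j : Fin d → ℤ) : Set ℝ :=
  {lam ∈ Set.Icc (1/2 : ℝ) (3/2) |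
    |lam ^ 2 * (∑ k, ω k * l k) ^ 2 - μhat j| < γ * (N₀ : ℝ) ^ (-τ₁)}

set_option maxHeartbeats 1000000 in
lemma single_bound {ν d : ℕ} (ω : Fin ν → ℝ) (μhat : (Fin d → ℤ) → ℝ)
    (γ τ₁ γ₀ : ℝ) (N₀ : ℕ) (hN₀ : 1 ≤ N₀) (hγ : 0 < γ) (hγ₀ : 0 < γ₀)
    (l : Fin ν → ℤ) (j : Fin d → ℤ) (hl : l ≠ 0) (hlN : intSupNorm l ≤ N₀)
    (hdio : 2 * γ₀ / (intSupNorm l : ℝ) ^ (ν : ℝ) ≤ |∑ k, ω k * l k|) :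
    volume (resonantSet ω μhat γ τ₁ N₀ l j) ≤
      ENNReal.ofReal (γ * (N₀ : ℝ) ^ (2 * (ν : ℝ) - τ₁) / γ₀ ^ 2) := by
  set a : ℝ := ∑ k, ω k * l k with ha_def
  set ε : ℝ := γ * (N₀ : ℝ) ^ (-τ₁) with hε_def
  have hN0pos : (0:ℝ) < N₀ := by exact_mod_cast Nat.lt_of_lt_of_le Nat.zero_lt_one hN₀
  have hεpos : 0 < ε := mul_pos hγ (Real.rpow_pos_of_pos hN0pos _)
  have hIl : 1 ≤ intSupNorm l := by
    rcases Nat.eq_zero_or_pos (intSupNorm l) with h | h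
    · exfalso; apply hl; funext k
      have h' : Finset.univ.sup (fun k => (l k).natAbs) = ⊥ := h
      have := (Finset.sup_eq_bot_iff _ _).mp h' k (Finset.mem_univ k)
      simpa [Int.natAbs_eq_zero] using this
    · exact h
  have hIlpos : (0:ℝ) < (intSupNorm l : ℝ) := by exact_mod_cast hIl
  set P : ℝ := (N₀ : ℝ) ^ (ν : ℝ) with hP_def
  have hPpos : 0 < P := Real.rpow_pos_of_pos hN0pos _
  have hP : (intSupNorm l : ℝ) ^ (ν : ℝ) ≤ P :=
    Real.rpow_le_rpow (le_of_lt hIlpos) (by exact_mod_cast hlN) (by positivity)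
  have ha : 2 * γ₀ / P ≤ |a| := by
    refine le_trans ?_ hdio
    exact div_le_div_of_nonneg_left (by positivity) (by positivity) hP
  have hApos : (0:ℝ) < 2 * γ₀ / P := by positivity
  have ha2 : 4 * γ₀ ^ 2 / P ^ 2 ≤ a ^ 2 := by
    have h1 : (2 * γ₀ / P) ^ 2 ≤ |a| ^ 2 := pow_le_pow_left₀ (le_of_lt hApos) ha 2
    rw [sq_abs] at h1
    calc 4 * γ₀ ^ 2 / P ^ 2 = (2 * γ₀ / P) ^ 2 := by ring
      _ ≤ a ^ 2 := h1
  have ha2' : 4 * γ₀ ^ 2 ≤ a ^ 2 * P ^ 2 := by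
    rw [div_le_iff₀ (by positivity)] at ha2; linarith [ha2]
  have ha2pos : 0 < a ^ 2 := lt_of_lt_of_le (by positivity) ha2
  have hexp : (N₀ : ℝ) ^ (2 * (ν : ℝ) - τ₁) = P * P * (N₀ : ℝ) ^ (-τ₁) := by
    rw [show 2 * (ν : ℝ) - τ₁ = (ν : ℝ) + ((ν : ℝ) + (-τ₁)) by ring,
      Real.rpow_add hN0pos, Real.rpow_add hN0pos]
    ring
  rcases Set.eq_empty_or_nonempty (resonantSet ω μhat γ τ₁ N₀ l j) with hE | ⟨x₀, hx₀⟩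
  · rw [hE]; simp
  set D : ℝ := 2 * ε / a ^ 2 with hD_def
  have hsub : resonantSet ω μhat γ τ₁ N₀ l j ⊆ Set.Icc (x₀ - D) (x₀ + D) := by
    intro x hx
    obtain ⟨⟨hx1, hx2⟩, hx3⟩ := hx
    obtain ⟨⟨h01, h02⟩, h03⟩ := hx₀
    have htri : |x ^ 2 * a ^ 2 - x₀ ^ 2 * a ^ 2| < 2 * ε := by
      have h := abs_sub_le (x ^ 2 * a ^ 2) (μhat j) (x₀ ^ 2 * a ^ 2)
      rw [abs_sub_comm (μhat j)] at h
      linarith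
    have h2 : 1 ≤ |x + x₀| := by
      rw [abs_of_nonneg (by linarith)]; linarith
    have hfac : |x - x₀| * a ^ 2 ≤ |x ^ 2 * a ^ 2 - x₀ ^ 2 * a ^ 2| := by
      have h1 : |x ^ 2 * a ^ 2 - x₀ ^ 2 * a ^ 2| = |x + x₀| * |x - x₀| * a ^ 2 := by
        rw [show x ^ 2 * a ^ 2 - x₀ ^ 2 * a ^ 2 = (x + x₀) * (x - x₀) * a ^ 2 by ring,
          abs_mul, abs_mul, abs_of_nonneg (sq_nonneg a)]
      rw [h1]
      nlinarith [mul_nonneg (mul_nonneg (sub_nonneg.mpr h2) (abs_nonneg (x - x₀))) (sq_nonneg a)]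
    have hD' : |x - x₀| ≤ D := by
      rw [hD_def, le_div_iff₀ ha2pos]
      nlinarith
    have := abs_le.mp hD'
    constructor <;> linarith [this.1, this.2]
  calc volume (resonantSet ω μhat γ τ₁ N₀ l j)
      ≤ volume (Set.Icc (x₀ - D) (x₀ + D)) := measure_mono hsub
    _ = ENNReal.ofReal (2 * D) := by rw [Real.volume_Icc]; ring_nf
    _ ≤ ENNReal.ofReal (γ * (N₀ : ℝ) ^ (2 * (ν : ℝ) - τ₁) / γ₀ ^ 2) := by
        apply ENNReal.ofReal_le_ofReal
        rw [hexp, hD_def, show 2 * (2 * ε / a ^ 2) = 4 * ε / a ^ 2 by ring,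
          div_le_div_iff₀ ha2pos (by positivity)]
        nlinarith [mul_nonneg hεpos.le (sub_nonneg.mpr ha2'), Real.rpow_pos_of_pos hN0pos (-τ₁)]


set_option maxHeartbeats 1000000 in
/-- Measure estimate on the resonant sets: if `ω̄` is `γ₀`-Diophantine,
`|μ̂_j| > β₀ > γN₀^{-τ₁}` and `τ₁ > 3ν + d`, then `R_{0,j} = ∅`, each `R_{l,j}`
(`l ≠ 0`) has measure `≤ C γ₀⁻² γ N₀^{-τ₁+2ν}`, and the union over
`|l|, |j| ≤ N₀` has measure `≤ C γ γ₀⁻² N₀^{d+3ν-τ₁} = O(γ)`. -/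
theorem resonant_sets_measure (ν d : ℕ) (hν : 1 ≤ ν) :
    ∃ C : ℝ, 0 < C ∧
      ∀ (ω : Fin ν → ℝ) (γ₀ : ℝ), 0 < γ₀ → γ₀ < 1 →
      (∀ l : Fin ν → ℤ, l ≠ 0 →
        2 * γ₀ / (intSupNorm l : ℝ) ^ (ν : ℝ) ≤ |∑ k, ω k * l k|) →
      ∀ (N₀ : ℕ), 1 ≤ N₀ →
      ∀ (γ τ₁ β₀ : ℝ), γ ∈ Set.Ioo (0 : ℝ) 1 → 3 * (ν : ℝ) + d < τ₁ → 0 < β₀ →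
      ∀ μhat : (Fin d → ℤ) → ℝ,
      (∀ j : Fin d → ℤ, intSupNorm j ≤ N₀ → β₀ < |μhat j|) →
      γ * (N₀ : ℝ) ^ (-τ₁) < β₀ →
      ((∀ j : Fin d → ℤ, intSupNorm j ≤ N₀ →
          resonantSet ω μhat γ τ₁ N₀ 0 j = ∅) ∧
       (∀ (l : Fin ν → ℤ) (j : Fin d → ℤ), l ≠ 0 →
          intSupNorm l ≤ N₀ → intSupNorm j ≤ N₀ →
          volume (resonantSet ω μhat γ τ₁ N₀ l j) ≤
            ENNReal.ofReal (C * γ * (N₀ : ℝ) ^ (2 * (ν : ℝ) - τ₁) / γ₀ ^ 2)) ∧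
       volume (⋃ l ∈ {l : Fin ν → ℤ | intSupNorm l ≤ N₀},
           ⋃ j ∈ {j : Fin d → ℤ | intSupNorm j ≤ N₀},
             resonantSet ω μhat γ τ₁ N₀ l j) ≤
         ENNReal.ofReal (C * γ * (N₀ : ℝ) ^ ((d : ℝ) + 3 * ν - τ₁) / γ₀ ^ 2)) := by
  refine ⟨3 ^ (ν + d), by positivity, ?_⟩
  intro ω γ₀ hγ₀ hγ₀1 hdio N₀ hN₀ γ τ₁ β₀ hγ hτ hβ₀ μhat hμ hsmall
  set C : ℝ := 3 ^ (ν + d) with hC_def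
  have hC1 : (1:ℝ) ≤ C := one_le_pow₀ (by norm_num : (1:ℝ) ≤ 3)
  have hN0pos : (0:ℝ) < N₀ := by exact_mod_cast Nat.lt_of_lt_of_le Nat.zero_lt_one hN₀
  -- Part 1: R_{0,j} = ∅
  have part1 : ∀ j : Fin d → ℤ, intSupNorm j ≤ N₀ →
      resonantSet ω μhat γ τ₁ N₀ 0 j = ∅ := by
    intro j hj
    ext x
    simp only [resonantSet, Set.mem_setOf_eq, Set.mem_empty_iff_false, iff_false, not_and]
    rintro - h
    have hz : (∑ k, ω k * (((0 : Fin ν → ℤ)) k : ℝ)) = 0 := by simp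
    rw [hz] at h
    have : |μhat j| < γ * (N₀ : ℝ) ^ (-τ₁) := by
      simpa using h
    have := hμ j hj
    linarith
  refine ⟨part1, ?_, ?_⟩
  -- Part 2
  · intro l j hl hlN hjN
    refine le_trans (single_bound ω μhat γ τ₁ γ₀ N₀ hN₀ hγ.1 hγ₀ l j hl hlN (hdio l hl)) ?_
    apply ENNReal.ofReal_le_ofReal
    have hx : (0:ℝ) < γ * (N₀ : ℝ) ^ (2 * (ν : ℝ) - τ₁) :=
      mul_pos hγ.1 (Real.rpow_pos_of_pos hN0pos _)
    rw [div_le_div_iff₀ (by positivity) (by positivity)]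
    nlinarith [sq_nonneg γ₀, mul_pos hx (mul_pos hγ₀ hγ₀)]
  -- Part 3
  · set S : Finset (Fin ν → ℤ) := Fintype.piFinset (fun _ => Finset.Icc (-(N₀:ℤ)) (N₀:ℤ)) with hS_def
    set T : Finset (Fin d → ℤ) := Fintype.piFinset (fun _ => Finset.Icc (-(N₀:ℤ)) (N₀:ℤ)) with hT_def
    have hmemS : ∀ l : Fin ν → ℤ, intSupNorm l ≤ N₀ ↔ l ∈ S := by
      intro l
      simp only [hS_def, Fintype.mem_piFinset, Finset.mem_Icc, intSupNorm,
        Finset.sup_le_iff, Finset.mem_univ, forall_true_left]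
      constructor <;> intro h k <;> (have := h k; omega)
    have hmemT : ∀ j : Fin d → ℤ, intSupNorm j ≤ N₀ ↔ j ∈ T := by
      intro j
      simp only [hT_def, Fintype.mem_piFinset, Finset.mem_Icc, intSupNorm,
        Finset.sup_le_iff, Finset.mem_univ, forall_true_left]
      constructor <;> intro h k <;> (have := h k; omega)
    set B : ℝ := γ * (N₀ : ℝ) ^ (2 * (ν : ℝ) - τ₁) / γ₀ ^ 2 with hB_def
    have hBpos : 0 < B := by
      apply div_pos (mul_pos hγ.1 (Real.rpow_pos_of_pos hN0pos _)) (by positivity)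
    have hone : ∀ l ∈ S, ∀ j ∈ T,
        volume (resonantSet ω μhat γ τ₁ N₀ l j) ≤ ENNReal.ofReal B := by
      intro l hlS j hjT
      by_cases hl : l = 0
      · rw [hl, part1 j ((hmemT j).mpr hjT)]
        simp
      · exact single_bound ω μhat γ τ₁ γ₀ N₀ hN₀ hγ.1 hγ₀ l j hl
          ((hmemS l).mpr hlS) (hdio l hl)
    have hUeq : (⋃ l ∈ {l : Fin ν → ℤ | intSupNorm l ≤ N₀},
        ⋃ j ∈ {j : Fin d → ℤ | intSupNorm j ≤ N₀}, resonantSet ω μhat γ τ₁ N₀ l j)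
        = ⋃ l ∈ S, ⋃ j ∈ T, resonantSet ω μhat γ τ₁ N₀ l j := by
      ext x
      simp only [Set.mem_iUnion, exists_prop, Set.mem_setOf_eq]
      constructor
      · rintro ⟨l, hl, j, hj, hx⟩
        exact ⟨l, (hmemS l).mp hl, j, (hmemT j).mp hj, hx⟩
      · rintro ⟨l, hl, j, hj, hx⟩
        exact ⟨l, (hmemS l).mpr hl, j, (hmemT j).mpr hj, hx⟩
    rw [hUeq]
    have hstep : volume (⋃ l ∈ S, ⋃ j ∈ T, resonantSet ω μhat γ τ₁ N₀ l j) ≤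
        (S.card * T.card : ℕ) * ENNReal.ofReal B := by
      calc volume (⋃ l ∈ S, ⋃ j ∈ T, resonantSet ω μhat γ τ₁ N₀ l j)
          ≤ ∑ l ∈ S, volume (⋃ j ∈ T, resonantSet ω μhat γ τ₁ N₀ l j) :=
            measure_biUnion_finset_le _ _
        _ ≤ ∑ l ∈ S, ∑ j ∈ T, volume (resonantSet ω μhat γ τ₁ N₀ l j) :=
            Finset.sum_le_sum fun l _ => measure_biUnion_finset_le _ _
        _ ≤ ∑ l ∈ S, ∑ j ∈ T, ENNReal.ofReal B :=
            Finset.sum_le_sum fun l hl => Finset.sum_le_sum fun j hj => hone l hl j hj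
        _ = (S.card * T.card : ℕ) * ENNReal.ofReal B := by
            simp [Finset.sum_const, mul_assoc]
    refine hstep.trans ?_
    have hcardS : S.card = (2 * N₀ + 1) ^ ν := by
      rw [hS_def, Fintype.card_piFinset]
      simp only [Int.card_Icc, Finset.prod_const, Finset.card_univ, Fintype.card_fin]
      congr 1
      omega
    have hcardT : T.card = (2 * N₀ + 1) ^ d := by
      rw [hT_def, Fintype.card_piFinset]
      simp only [Int.card_Icc, Finset.prod_const, Finset.card_univ, Fintype.card_fin]
      congr 1
      omega
    rw [show ((S.card * T.card : ℕ) : ENNReal) = ENNReal.ofReal ((S.card * T.card : ℕ) : ℝ) from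
      (ENNReal.ofReal_natCast _).symm, ← ENNReal.ofReal_mul (by positivity)]
    apply ENNReal.ofReal_le_ofReal
    have hA : ((S.card * T.card : ℕ) : ℝ) ≤ C * (N₀ : ℝ) ^ (ν + d) := by
      rw [hcardS, hcardT]
      push_cast
      rw [← pow_add]
      calc ((2 * (N₀:ℝ) + 1)) ^ (ν + d) ≤ (3 * (N₀:ℝ)) ^ (ν + d) := by
            apply pow_le_pow_left₀ (by positivity)
            have : (1:ℝ) ≤ N₀ := by exact_mod_cast hN₀
            linarith
        _ = C * (N₀ : ℝ) ^ (ν + d) := by rw [mul_pow]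
    have hsplit : (N₀:ℝ) ^ ((d : ℝ) + 3 * ν - τ₁) =
        (N₀:ℝ) ^ (ν + d) * (N₀:ℝ) ^ (2 * (ν : ℝ) - τ₁) := by
      rw [← Real.rpow_natCast (N₀:ℝ) (ν + d), ← Real.rpow_add hN0pos]
      congr 1
      push_cast
      ring
    rw [hB_def, hsplit, show C * γ * ((N₀:ℝ) ^ (ν + d) * (N₀:ℝ) ^ (2 * (ν : ℝ) - τ₁)) / γ₀ ^ 2
      = (C * (N₀:ℝ) ^ (ν + d)) * (γ * (N₀:ℝ) ^ (2 * (ν : ℝ) - τ₁) / γ₀ ^ 2) by ring]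
    exact mul_le_mul_of_nonneg_right hA (by positivity)
end
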